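/- arXiv:1707.00294 — 4 statements merged into one kernel-verified Lean document; each statement's English description precedes it below -/
import Mathlib

section
/- Let P be a plane and L a set of pairwise parallel lines of P (L may be empty or a singleton), and let p be a point not in P. Then there exists a plane P(L) whose point set is the point set of P together with p, whose restriction to the points of P is P, and such that for distinct points q, r of P, the three points p, q, r are collinear in P(L) if and only if the line q ∨ r belongs to L. Moreover P(L) is unique up to an isomorphism fixing P pointwise. -/
/-- A plane: a two-sorted point-line incidence system satisfying axioms (A)-(D). -/
structure IsPlane {Pt Ln : Type} (inc : Pt → Ln → Prop) : Prop where
  unique_line : ∀ p q : Pt, p ≠ q → ∃! l : Ln, inc p l ∧ inc q l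
  unique_point : ∀ l m : Ln, l ≠ m → ∀ p q : Pt,
    inc p l → inc p m → inc q l → inc q m → p = q
  two_points : ∀ l : Ln, ∃ p q : Pt, p ≠ q ∧ inc p l ∧ inc q l
  nondeg : ∃ p q r : Pt, p ≠ q ∧ p ≠ r ∧ q ≠ r ∧
    ∀ l : Ln, ¬ (inc p l ∧ inc q l ∧ inc r l)

/-- Three points are collinear if some line is incident with all three. -/
def PlaneCollinear {Pt Ln : Type} (inc : Pt → Ln → Prop) (p q r : Pt) : Prop :=
  ∃ l : Ln, inc p l ∧ inc q l ∧ inc r l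

section Aux

variable {Pt Ln : Type} {inc : Pt → Ln → Prop}

lemma IsPlane.line_through (h : IsPlane inc) (p : Pt) : ∃ l, inc p l := by
  obtain ⟨a, b, c, hab, hac, hbc, -⟩ := h.nondeg
  rcases eq_or_ne p a with rfl | hpa
  · obtain ⟨l, ⟨hl, -⟩, -⟩ := h.unique_line p b hab; exact ⟨l, hl⟩
  · obtain ⟨l, ⟨hl, -⟩, -⟩ := h.unique_line p a hpa; exact ⟨l, hl⟩

lemma IsPlane.coll_degen (h : IsPlane inc) {x y z : Pt}
    (hd : x = y ∨ x = z ∨ y = z) : PlaneCollinear inc x y z := by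
  rcases hd with rfl | rfl | rfl
  · rcases eq_or_ne x z with rfl | hxz
    · obtain ⟨l, hl⟩ := h.line_through x; exact ⟨l, hl, hl, hl⟩
    · obtain ⟨l, ⟨h1, h2⟩, -⟩ := h.unique_line x z hxz; exact ⟨l, h1, h1, h2⟩
  · rcases eq_or_ne x y with rfl | hxy
    · obtain ⟨l, hl⟩ := h.line_through x; exact ⟨l, hl, hl, hl⟩
    · obtain ⟨l, ⟨h1, h2⟩, -⟩ := h.unique_line x y hxy; exact ⟨l, h1, h2, h1⟩
  · rcases eq_or_ne x y with rfl | hxy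
    · obtain ⟨l, hl⟩ := h.line_through x; exact ⟨l, hl, hl, hl⟩
    · obtain ⟨l, ⟨h1, h2⟩, -⟩ := h.unique_line x y hxy; exact ⟨l, h1, h2, h2⟩

/-- One-directional transfer of collinearity between two planes on `Option Pt`
satisfying the same extension properties. -/
lemma coll_unique (L : Set Ln) {A B : Type}
    (incA : Option Pt → A → Prop) (incB : Option Pt → B → Prop)
    (hB : IsPlane incB)
    (hA1 : ∀ p q r : Pt, PlaneCollinear incA (some p) (some q) (some r) ↔ PlaneCollinear inc p q r)
    (hB1 : ∀ p q r : Pt, PlaneCollinear incB (some p) (some q) (some r) ↔ PlaneCollinear inc p q r)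
    (hA2 : ∀ q r : Pt, q ≠ r →
      (PlaneCollinear incA none (some q) (some r) ↔ ∃ l ∈ L, inc q l ∧ inc r l))
    (hB2 : ∀ q r : Pt, q ≠ r →
      (PlaneCollinear incB none (some q) (some r) ↔ ∃ l ∈ L, inc q l ∧ inc r l))
    (x y z : Option Pt) (hc : PlaneCollinear incA x y z) : PlaneCollinear incB x y z := by
  by_cases hd : x = y ∨ x = z ∨ y = z
  · exact hB.coll_degen hd
  push_neg at hd
  obtain ⟨hxy, hxz, hyz⟩ := hd
  match x, y, z with
  | some a, some b, some c =>
      exact (hB1 a b c).2 ((hA1 a b c).1 hc)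
  | none, some b, some c =>
      exact (hB2 b c (by simpa using hyz)).2 ((hA2 b c (by simpa using hyz)).1 hc)
  | some a, none, some c =>
      have h' : PlaneCollinear incA none (some a) (some c) := by
        obtain ⟨l, h1, h2, h3⟩ := hc; exact ⟨l, h2, h1, h3⟩
      have hac : a ≠ c := by simpa using hxz
      obtain ⟨l, h1, h2, h3⟩ := (hB2 a c hac).2 ((hA2 a c hac).1 h')
      exact ⟨l, h2, h1, h3⟩
  | some a, some b, none =>
      have h' : PlaneCollinear incA none (some a) (some b) := by
        obtain ⟨l, h1, h2, h3⟩ := hc; exact ⟨l, h3, h1, h2⟩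
      have hab : a ≠ b := by simpa using hxy
      obtain ⟨l, h1, h2, h3⟩ := (hB2 a b hab).2 ((hA2 a b hab).1 h')
      exact ⟨l, h2, h3, h1⟩
  | none, none, _ => exact absurd rfl hxy
  | some _, none, none => exact absurd rfl hyz
  | none, some _, none => exact absurd rfl hxz

end Aux

/-- Crapo's one-point extension theorem (rank 3 case): given a plane `P`, a set `L` of
pairwise parallel lines of `P`, and a new point (here `none : Option Pt`), there is a
plane `P(L)` on the points of `P` together with the new point, restricting to `P` on
the old points, in which the new point is collinear with distinct old points `q, r`
exactly when the line `q ∨ r` belongs to `L`; moreover `P(L)` is unique up to an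
isomorphism fixing `P` pointwise (its collinearity relation is uniquely determined). -/
theorem stmt2 {Pt Ln : Type} (inc : Pt → Ln → Prop) (h : IsPlane inc) (L : Set Ln)
    (hL : ∀ l ∈ L, ∀ m ∈ L, l ≠ m → ∀ p : Pt, ¬ (inc p l ∧ inc p m)) :
    ∃ (Ln' : Type) (inc' : Option Pt → Ln' → Prop), IsPlane inc' ∧
      (∀ p q r : Pt, PlaneCollinear inc' (some p) (some q) (some r) ↔ PlaneCollinear inc p q r) ∧
      (∀ q r : Pt, q ≠ r →
        (PlaneCollinear inc' none (some q) (some r) ↔ ∃ l ∈ L, inc q l ∧ inc r l)) ∧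
      ∀ (Ln'' : Type) (inc'' : Option Pt → Ln'' → Prop), IsPlane inc'' →
        (∀ p q r : Pt,
          PlaneCollinear inc'' (some p) (some q) (some r) ↔ PlaneCollinear inc p q r) →
        (∀ q r : Pt, q ≠ r →
          (PlaneCollinear inc'' none (some q) (some r) ↔ ∃ l ∈ L, inc q l ∧ inc r l)) →
        ∀ x y z : Option Pt, PlaneCollinear inc' x y z ↔ PlaneCollinear inc'' x y z := by
  classical
  -- New lines: old lines (those in `L` now pass through `none`), plus, for each point
  -- lying on no line of `L`, a new line consisting of that point and `none`.
  set Ln' := Ln ⊕ {q : Pt // ∀ l ∈ L, ¬ inc q l} with hLn'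
  set inc' : Option Pt → Ln' → Prop := fun x l =>
    match x, l with
    | some p, Sum.inl l => inc p l
    | none, Sum.inl l => l ∈ L
    | some p, Sum.inr q => p = q.1
    | none, Sum.inr _ => True
  with hinc'
  have hsome : ∀ (p : Pt) (l : Ln), inc' (some p) (Sum.inl l) = inc p l := fun _ _ => rfl
  have hplane : IsPlane inc' := by
    constructor
    · -- unique_line
      rintro (_ | p) (_ | q) hpq
      · exact absurd rfl hpq
      · -- none, some q
        by_cases hq : ∃ l ∈ L, inc q l
        · obtain ⟨l, hlL, hql⟩ := hq
          refine ⟨Sum.inl l, ⟨hlL, hql⟩, ?_⟩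
          rintro (m | s) ⟨hm1, hm2⟩
          · rcases eq_or_ne m l with rfl | hne
            · rfl
            · exact absurd ⟨hm2, hql⟩ (hL m hm1 l hlL hne q)
          · exact absurd (hm2 ▸ hql) (s.2 l hlL)
        · push_neg at hq
          refine ⟨Sum.inr ⟨q, hq⟩, ⟨trivial, rfl⟩, ?_⟩
          rintro (m | s) ⟨hm1, hm2⟩
          · exact absurd hm2 (hq m hm1)
          · exact congrArg Sum.inr (Subtype.ext hm2.symm)
      · -- some p, none
        by_cases hp : ∃ l ∈ L, inc p l
        · obtain ⟨l, hlL, hpl⟩ := hp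
          refine ⟨Sum.inl l, ⟨hpl, hlL⟩, ?_⟩
          rintro (m | s) ⟨hm1, hm2⟩
          · rcases eq_or_ne m l with rfl | hne
            · rfl
            · exact absurd ⟨hm1, hpl⟩ (hL m hm2 l hlL hne p)
          · exact absurd hpl (hm1 ▸ s.2 l hlL)
        · push_neg at hp
          refine ⟨Sum.inr ⟨p, hp⟩, ⟨rfl, trivial⟩, ?_⟩
          rintro (m | s) ⟨hm1, hm2⟩
          · exact absurd hm1 (hp m hm2)
          · exact congrArg Sum.inr (Subtype.ext hm1.symm)
      · -- some p, some q
        have hpq' : p ≠ q := fun e => hpq (congrArg some e)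
        obtain ⟨l, ⟨h1, h2⟩, hu⟩ := h.unique_line p q hpq'
        refine ⟨Sum.inl l, ⟨h1, h2⟩, ?_⟩
        rintro (m | s) ⟨hm1, hm2⟩
        · exact congrArg Sum.inl (hu m ⟨hm1, hm2⟩)
        · exact absurd (hm1.trans hm2.symm) hpq'
    · -- unique_point
      rintro (l | s) (m | t) hlm (_ | p) (_ | q) hpl hpm hql hqm
      · rfl
      · exact absurd ⟨hql, hqm⟩ (hL l hpl m hpm (fun e => hlm (congrArg Sum.inl e)) q)
      · exact absurd ⟨hpl, hpm⟩ (hL l hql m hqm (fun e => hlm (congrArg Sum.inl e)) p)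
      · exact congrArg some (h.unique_point l m (fun e => hlm (congrArg Sum.inl e))
          p q hpl hpm hql hqm)
      · rfl
      · exact absurd hql (hqm ▸ t.2 l hpl)
      · exact absurd hpl (hpm ▸ t.2 l hql)
      · exact congrArg some (hpm.trans hqm.symm)
      · rfl
      · exact absurd hqm (hql ▸ s.2 m hpm)
      · exact absurd hpm (hpl ▸ s.2 m hqm)
      · exact congrArg some (hpl.trans hql.symm)
      · rfl
      · exact absurd (congrArg Sum.inr (Subtype.ext (hql.symm.trans hqm))) hlm
      · exact absurd (congrArg Sum.inr (Subtype.ext (hpl.symm.trans hpm))) hlm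
      · exact congrArg some (hpl.trans hql.symm)
    · -- two_points
      rintro (l | s)
      · obtain ⟨p, q, hpq, h1, h2⟩ := h.two_points l
        exact ⟨some p, some q, fun e => hpq (Option.some_injective _ e), h1, h2⟩
      · exact ⟨none, some s.1, fun e => Option.some_ne_none _ e.symm, trivial, rfl⟩
    · -- nondeg
      obtain ⟨a, b, c, hab, hac, hbc, hno⟩ := h.nondeg
      refine ⟨some a, some b, some c, fun e => hab (Option.some_injective _ e),
        fun e => hac (Option.some_injective _ e), fun e => hbc (Option.some_injective _ e), ?_⟩
      rintro (l | s) ⟨h1, h2, h3⟩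
      · exact hno l ⟨h1, h2, h3⟩
      · exact hab (h1.trans h2.symm)
  have hprop1 : ∀ p q r : Pt,
      PlaneCollinear inc' (some p) (some q) (some r) ↔ PlaneCollinear inc p q r := by
    intro p q r
    constructor
    · rintro ⟨(l | s), h1, h2, h3⟩
      · exact ⟨l, h1, h2, h3⟩
      · have : p = q := h1.trans h2.symm
        subst this
        have : p = r := h1.trans h3.symm
        subst this
        exact h.coll_degen (Or.inl rfl)
    · rintro ⟨l, h1, h2, h3⟩
      exact ⟨Sum.inl l, h1, h2, h3⟩
  have hprop2 : ∀ q r : Pt, q ≠ r →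
      (PlaneCollinear inc' none (some q) (some r) ↔ ∃ l ∈ L, inc q l ∧ inc r l) := by
    intro q r hqr
    constructor
    · rintro ⟨(l | s), h1, h2, h3⟩
      · exact ⟨l, h1, h2, h3⟩
      · exact absurd (h2.trans h3.symm) hqr
    · rintro ⟨l, hlL, h1, h2⟩
      exact ⟨Sum.inl l, hlL, h1, h2⟩
  refine ⟨Ln', inc', hplane, hprop1, hprop2, ?_⟩
  intro Ln'' inc'' h'' h1'' h2'' x y z
  exact ⟨coll_unique L inc' inc'' h'' hprop1 h1'' hprop2 h2'' x y z,
    coll_unique L inc'' inc' hplane h1'' hprop1 h2'' hprop2 x y z⟩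
end

section
/- In the plane P_Γ, for each vertex index α, the set of points incident with the line ℓ_α = p_{(α,0)} ∨ p_{(α,1)} is exactly {p_{(α,0)}, p_{(α,1)}, p_{(α,2)}} ∪ {p_e : e an edge of Γ containing v_α}. -/
namespace PG

/-- The point set of the plane `P_Γ`: the 17 points of `P*`, three points per vertex,
and one point per edge. -/
abbrev Point (PStar : Type) {V : Type} (G : SimpleGraph V) : Type :=
  PStar ⊕ (V × Fin 3) ⊕ ↥G.edgeSet

variable {PStar LStar V : Type}

/-- A point of `P*` viewed in `P_Γ`. -/
def spt (G : SimpleGraph V) (p : PStar) : Point PStar G := Sum.inl p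

/-- The point `p_{(v,i)}` of `P_Γ`. -/
def vpt (PStar : Type) (G : SimpleGraph V) (v : V) (i : Fin 3) : Point PStar G :=
  Sum.inr (Sum.inl (v, i))

/-- The point `p_e` of `P_Γ`, for `e` an edge. -/
def ept (PStar : Type) (G : SimpleGraph V) (e : G.edgeSet) : Point PStar G :=
  Sum.inr (Sum.inr e)

/-- The point set in `P_Γ` of a line `l` of `P*`. -/
def setStar (inc : PStar → LStar → Prop) (G : SimpleGraph V) (l : LStar) :
    Set (Point PStar G) :=
  {x | ∃ p : PStar, inc p l ∧ x = spt G p}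

/-- The point set of the line `p₂ ∨ 1'` of `P*` extended by all points `p_{(v,0)}`. -/
def setA (inc : PStar → LStar → Prop) (LA : LStar) (G : SimpleGraph V) :
    Set (Point PStar G) :=
  setStar inc G LA ∪ {x | ∃ v : V, x = vpt PStar G v 0}

/-- The point set of the line `0 ∨ 1'` of `P*` extended by all points `p_{(v,1)}`. -/
def setB (inc : PStar → LStar → Prop) (LB : LStar) (G : SimpleGraph V) :
    Set (Point PStar G) :=
  setStar inc G LB ∪ {x | ∃ v : V, x = vpt PStar G v 1}

/-- The point set of the line `ℓ_v = p_{(v,0)} ∨ p_{(v,1)}` of `P_Γ`. -/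
def setEll (PStar : Type) (G : SimpleGraph V) (v : V) : Set (Point PStar G) :=
  {vpt PStar G v 0, vpt PStar G v 1, vpt PStar G v 2} ∪
    {x | ∃ e : G.edgeSet, v ∈ (e : Sym2 V) ∧ x = ept PStar G e}

/-- The nontrivial lines of `P_Γ` (given as point sets): the two extended lines of `P*`,
the lines `ℓ_v`, and the remaining lines of `P*`. -/
def nontrivLines (inc : PStar → LStar → Prop) (LA LB : LStar) (G : SimpleGraph V) :
    Set (Set (Point PStar G)) :=
  {setA inc LA G, setB inc LB G} ∪ Set.range (setEll PStar G) ∪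
    {S | ∃ l : LStar, l ≠ LA ∧ l ≠ LB ∧ S = setStar inc G l}

/-- All lines of `P_Γ` (as point sets): the nontrivial ones together with the trivial
two-point lines. -/
def lines (inc : PStar → LStar → Prop) (LA LB : LStar) (G : SimpleGraph V) :
    Set (Set (Point PStar G)) :=
  nontrivLines inc LA LB G ∪
    {S | ∃ x y : Point PStar G, x ≠ y ∧ S = {x, y} ∧
      ∀ T ∈ nontrivLines inc LA LB G, ¬ (x ∈ T ∧ y ∈ T)}

/-- Collinearity in the plane `P_Γ`. -/
def Col (inc : PStar → LStar → Prop) (LA LB : LStar) (G : SimpleGraph V)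
    (x y z : Point PStar G) : Prop :=
  ∃ S ∈ lines inc LA LB G, x ∈ S ∧ y ∈ S ∧ z ∈ S

end PG

/-- In `P_Γ`, the set of points incident with the line `ℓ_v = p_{(v,0)} ∨ p_{(v,1)}`
is exactly `{p_{(v,0)}, p_{(v,1)}, p_{(v,2)}} ∪ {p_e : v ∈ e ∈ E(Γ)}`. -/
theorem stmt10 {PStar LStar V : Type} (inc : PStar → LStar → Prop) (LA LB : LStar)
    (G : SimpleGraph V) (v : V) :
    PG.setEll PStar G v ∈ PG.lines inc LA LB G ∧
    (∀ S ∈ PG.lines inc LA LB G, PG.vpt PStar G v 0 ∈ S → PG.vpt PStar G v 1 ∈ S →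
      S = PG.setEll PStar G v) ∧
    PG.setEll PStar G v =
      {PG.vpt PStar G v 0, PG.vpt PStar G v 1, PG.vpt PStar G v 2} ∪
        {x | ∃ e : G.edgeSet, v ∈ (e : Sym2 V) ∧ x = PG.ept PStar G e} := by

  constructor
  · exact Or.inl (Or.inl (Or.inr ⟨v, rfl⟩))
  refine ⟨?_, rfl⟩
  intro S hS h0 h1
  have hne : PG.vpt PStar G v (0 : Fin 3) ≠ PG.vpt PStar G v 1 := by
    simp [PG.vpt]
  rcases hS with hS | ⟨x, y, hxy, rfl, hT⟩
  · rcases hS with (hS | ⟨w, rfl⟩) | ⟨l, _, _, rfl⟩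
    · rcases hS with rfl | rfl
      · exfalso
        rcases h1 with ⟨p, _, hp⟩ | ⟨w, hw⟩
        · simp [PG.vpt, PG.spt] at hp
        · simp [PG.vpt] at hw
      · exfalso
        rcases h0 with ⟨p, _, hp⟩ | ⟨w, hw⟩
        · simp [PG.vpt, PG.spt] at hp
        · simp [PG.vpt] at hw
    · have : w = v := by
        rcases h0 with (h | h | h) | ⟨e, _, h⟩ <;>
          simp [PG.vpt, PG.ept] at h
        · exact h.symm
      rw [this]
    · exfalso
      rcases h0 with ⟨p, _, hp⟩
      simp [PG.vpt, PG.spt] at hp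
  · exfalso
    have hEll : PG.setEll PStar G v ∈ PG.nontrivLines inc LA LB G :=
      Or.inl (Or.inr ⟨v, rfl⟩)
    have hx : x ∈ PG.setEll PStar G v := by
      rcases h0 with rfl | rfl
      · exact Or.inl (Or.inl rfl)
      · rcases h1 with rfl | h1y
        · exact Or.inl (Or.inr (Or.inl rfl))
        · exact absurd (h1y ▸ rfl : PG.vpt PStar G v 0 = PG.vpt PStar G v 1) hne
    have hy : y ∈ PG.setEll PStar G v := by
      rcases h1 with rfl | rfl
      · rcases h0 with h0x | rfl
        · exact absurd (h0x ▸ rfl : PG.vpt PStar G v 0 = PG.vpt PStar G v 1) hne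
        · exact Or.inl (Or.inl rfl)
      · exact Or.inl (Or.inr (Or.inl rfl))
    exact hT _ hEll ⟨hx, hy⟩
end

section
/- In the plane P_Γ constructed from a graph Γ, the map v_α ↦ ℓ_α = p_{(α,0)} ∨ p_{(α,1)} is a graph isomorphism from Γ onto the graph whose vertices are the lines {ℓ_α : α < λ} with ℓ_α adjacent to ℓ_β if and only if ℓ_α and ℓ_β intersect in a point of P_Γ. -/
/-- The map `v ↦ ℓ_v = p_{(v,0)} ∨ p_{(v,1)}` is a graph isomorphism from `Γ` onto the
graph on the lines `{ℓ_v}` with `ℓ_α` adjacent to `ℓ_β` iff they meet in a point of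
`P_Γ`: it is injective, and distinct vertices are adjacent in `Γ` iff the corresponding
lines intersect. -/
theorem stmt11 {PStar LStar V : Type} (inc : PStar → LStar → Prop) (LA LB : LStar)
    (G : SimpleGraph V) :
    Function.Injective (PG.setEll PStar G) ∧
    ∀ α β : V, α ≠ β →
      (G.Adj α β ↔ ∃ x : PG.Point PStar G,
        x ∈ PG.setEll PStar G α ∧ x ∈ PG.setEll PStar G β) := by
  constructor
  · intro a b hab
    have h : PG.vpt PStar G a 0 ∈ PG.setEll PStar G b := by
      rw [← hab]
      exact Or.inl (Or.inl rfl)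
    simp only [PG.setEll, PG.vpt, PG.ept, Set.mem_union, Set.mem_insert_iff,
      Set.mem_singleton_iff, Set.mem_setOf_eq, Sum.inr.injEq, Sum.inl.injEq,
      Prod.mk.injEq, reduceCtorEq, and_false, exists_const, or_false,
      exists_false] at h
    rcases h with ⟨h, _⟩ | ⟨h, _⟩ | ⟨h, _⟩ <;> exact h
  · intro α β hne
    constructor
    · intro hadj
      refine ⟨PG.ept PStar G ⟨s(α, β), hadj⟩, Or.inr ⟨_, ?_, rfl⟩,
        Or.inr ⟨_, ?_, rfl⟩⟩ <;> simp
    · rintro ⟨x, hα, hβ⟩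
      rcases hβ with hβ | ⟨e, heβ, rfl⟩
      · rcases hα with hα | ⟨e, heα, rfl⟩
        · exfalso
          simp only [PG.setEll, Set.mem_insert_iff, Set.mem_singleton_iff] at hα hβ
          rcases hα with hα|hα|hα <;> rcases hβ with hβ|hβ|hβ <;> rw [hα] at hβ <;>
            simp [PG.vpt] at hβ <;> first | exact hne hβ.1 | exact hne hβ
        · exfalso
          simp [PG.setEll, PG.vpt, PG.ept] at hβ
      · rcases hα with hα | ⟨e', heα, hx⟩
        · exfalso
          simp [PG.setEll, PG.vpt, PG.ept] at hα
        · have he : e = e' := by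
            simpa [PG.ept] using hx
          subst he
          have h2 : (e : Sym2 V) = s(α, β) :=
            (Sym2.mem_and_mem_iff hne).mp ⟨heα, heβ⟩
          have h3 := e.2
          rw [h2] at h3
          exact h3
end

section
/- Pappus's theorem holds in the projective plane over any field K: given two distinct lines ℓ, ℓ' of 𝔓(K), triples of distinct points p,q,r on ℓ and p',q',r' on ℓ', all six points distinct from ℓ ∧ ℓ', the three points (p∨q')∧(p'∨q), (p∨r')∧(p'∨r), (q∨r')∧(q'∨r) are collinear. -/
open Module Submodule

set_option maxHeartbeats 800000

variable {K : Type} [Field K]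

lemma aux_exists_span (W : Submodule K (Fin 3 → K)) (hW : finrank K W = 1) :
    ∃ v : Fin 3 → K, v ≠ 0 ∧ W = span K {v} := by
  have hpos : 0 < finrank K W := by omega
  obtain ⟨⟨v, hvW⟩, hv⟩ := Module.finrank_pos_iff_exists_ne_zero.mp hpos
  have hv0 : v ≠ 0 := fun h => hv (by simp [h])
  refine ⟨v, hv0, ?_⟩
  refine (Submodule.eq_of_le_of_finrank_eq ?_ ?_).symm
  · exact (span_le).2 (Set.singleton_subset_iff.2 hvW)
  · rw [finrank_span_singleton hv0, hW]

lemma aux_sup2 {p q : Submodule K (Fin 3 → K)} (hp : finrank K p = 1)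
    (hq : finrank K q = 1) (h : p ≠ q) : finrank K ↥(p ⊔ q) = 2 := by
  have h4 := Submodule.finrank_sup_add_finrank_inf_eq p q
  have hle : finrank K ↥(p ⊓ q) ≤ 1 := hp ▸ Submodule.finrank_mono inf_le_left
  have h0 : finrank K ↥(p ⊓ q) = 0 := by
    rcases Nat.lt_or_ge (finrank K ↥(p ⊓ q)) 1 with h1 | h1
    · omega
    · exfalso
      have hinf : finrank K ↥(p ⊓ q) = 1 := le_antisymm hle h1
      have e1 : p ⊓ q = p := Submodule.eq_of_le_of_finrank_eq inf_le_left (by omega)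
      have e2 : p ⊓ q = q := Submodule.eq_of_le_of_finrank_eq inf_le_right (by omega)
      exact h (e1 ▸ e2)
  omega

lemma aux_sup3 {P Q : Submodule K (Fin 3 → K)} (hP : finrank K P = 2)
    (hQ : finrank K Q = 2) (h : P ≠ Q) : finrank K ↥(P ⊔ Q) = 3 := by
  have hle : finrank K ↥(P ⊔ Q) ≤ 3 := by
    have := Submodule.finrank_le (P ⊔ Q)
    simpa [Module.finrank_fin_fun] using this
  have hge : 2 ≤ finrank K ↥(P ⊔ Q) := hP ▸ Submodule.finrank_mono le_sup_left
  rcases Nat.lt_or_ge (finrank K ↥(P ⊔ Q)) 3 with h1 | h1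
  · exfalso
    have hs : finrank K ↥(P ⊔ Q) = 2 := by omega
    have e1 : P = P ⊔ Q := Submodule.eq_of_le_of_finrank_eq le_sup_left (by omega)
    have e2 : Q = P ⊔ Q := Submodule.eq_of_le_of_finrank_eq le_sup_right (by omega)
    exact h (e1.trans e2.symm)
  · omega

lemma aux_inf1 {P Q : Submodule K (Fin 3 → K)} (hP : finrank K P = 2)
    (hQ : finrank K Q = 2) (h : P ≠ Q) : finrank K ↥(P ⊓ Q) = 1 := by
  have h4 := Submodule.finrank_sup_add_finrank_inf_eq P Q
  have h3 := aux_sup3 hP hQ h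
  omega

lemma aux_point {x D : Submodule K (Fin 3 → K)} {v : Fin 3 → K}
    (hx1 : finrank K x = 1) (hxD : x ≤ D) (hD : finrank K D = 1)
    (hv : v ∈ D) (hv0 : v ≠ 0) : x = span K {v} := by
  have h1 : x = D := Submodule.eq_of_le_of_finrank_eq hxD (by rw [hx1, hD])
  have h2 : span K {v} = D :=
    Submodule.eq_of_le_of_finrank_eq ((span_le).2 (Set.singleton_subset_iff.2 hv))
      (by rw [finrank_span_singleton hv0, hD])
  exact h1.trans h2.symm

lemma aux_param {lP : Submodule K (Fin 3 → K)} {a u : Fin 3 → K}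
    (hl : lP = span K {a, u}) {W : Submodule K (Fin 3 → K)}
    (hW1 : finrank K W = 1) (hWl : W ≤ lP) {l' : Submodule K (Fin 3 → K)}
    (hu : u ∈ l') (hW2 : ¬ W ≤ l') : ∃ t : K, W = span K {a + t • u} := by
  obtain ⟨b, hb0, hb⟩ := aux_exists_span W hW1
  have hbl : b ∈ span K ({a, u} : Set (Fin 3 → K)) := by
    rw [← hl]; exact hWl (hb ▸ mem_span_singleton_self b)
  obtain ⟨s, t, hst⟩ := mem_span_pair.mp hbl
  have hs0 : s ≠ 0 := by
    intro h
    apply hW2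
    rw [hb, span_le, Set.singleton_subset_iff]
    rw [← hst, h, zero_smul, zero_add]
    exact smul_mem _ _ hu
  refine ⟨s⁻¹ * t, ?_⟩
  have : a + (s⁻¹ * t) • u = s⁻¹ • b := by
    rw [← hst]; rw [smul_add, smul_smul, smul_smul]
    rw [inv_mul_cancel₀ hs0, one_smul]
  rw [hb, this, span_singleton_smul_eq (isUnit_iff_ne_zero.2 (inv_ne_zero hs0)) b]

lemma aux_planes_ne {l l' A B A' B' : Submodule K (Fin 3 → K)}
    (hl : finrank K l = 2) (hl' : finrank K l' = 2) (hll : l ≠ l')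
    (hA : finrank K A = 1) (hB : finrank K B = 1) (hA' : finrank K A' = 1)
    (hB' : finrank K B' = 1)
    (hAl : A ≤ l) (hBl : B ≤ l) (hA'l : A' ≤ l') (hB'l : B' ≤ l')
    (hAB : A ≠ B) (hA'B' : A' ≠ B') (hA2 : ¬ A ≤ l') :
    A ⊔ B' ≠ A' ⊔ B := by
  intro hEq
  have hABne : A ≠ B' := fun h => hA2 (h ▸ hB'l)
  have hM : finrank K ↥(A ⊔ B') = 2 := aux_sup2 hA hB' hABne
  have hlAB : l = A ⊔ B := (Submodule.eq_of_le_of_finrank_eq (sup_le hAl hBl)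
    (by rw [aux_sup2 hA hB hAB, hl])).symm
  have hl'AB : l' = A' ⊔ B' := (Submodule.eq_of_le_of_finrank_eq (sup_le hA'l hB'l)
    (by rw [aux_sup2 hA' hB' hA'B', hl'])).symm
  have hle : l ⊔ l' ≤ A ⊔ B' := by
    rw [hlAB, hl'AB]
    refine sup_le (sup_le ?_ ?_) (sup_le ?_ ?_)
    · exact le_sup_left
    · exact hEq ▸ le_sup_right
    · exact hEq ▸ le_sup_left
    · exact le_sup_right
  have := Submodule.finrank_mono hle
  rw [aux_sup3 hl hl' hll, hM] at this
  omega

/-- Pappus's theorem in the projective plane `𝔓(K)` over a field `K` (points are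
1-dimensional subspaces of `K³`, lines are 2-dimensional subspaces, incidence is
inclusion): given distinct lines `ℓ, ℓ'`, triples of distinct points `p, q, r` on `ℓ`
and `p', q', r'` on `ℓ'`, all six points distinct from `ℓ ∧ ℓ'`, the three points
`(p∨q')∧(p'∨q)`, `(p∨r')∧(p'∨r)`, `(q∨r')∧(q'∨r)` are collinear. -/
theorem stmt15 {K : Type} [Field K]
    (ℓ ℓ' : {W : Submodule K (Fin 3 → K) // Module.finrank K ↥W = 2})
    (p q r p' q' r' : {W : Submodule K (Fin 3 → K) // Module.finrank K ↥W = 1})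
    (hll : ℓ ≠ ℓ')
    (hpq : p ≠ q) (hpr : p ≠ r) (hqr : q ≠ r)
    (hpq' : p' ≠ q') (hpr' : p' ≠ r') (hqr' : q' ≠ r')
    (hp : p.1 ≤ ℓ.1) (hq : q.1 ≤ ℓ.1) (hr : r.1 ≤ ℓ.1)
    (hp' : p'.1 ≤ ℓ'.1) (hq' : q'.1 ≤ ℓ'.1) (hr' : r'.1 ≤ ℓ'.1)
    (hp2 : ¬ p.1 ≤ ℓ'.1) (hq2 : ¬ q.1 ≤ ℓ'.1) (hr2 : ¬ r.1 ≤ ℓ'.1)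
    (hp'2 : ¬ p'.1 ≤ ℓ.1) (hq'2 : ¬ q'.1 ≤ ℓ.1) (hr'2 : ¬ r'.1 ≤ ℓ.1)
    (x₁ x₂ x₃ : {W : Submodule K (Fin 3 → K) // Module.finrank K ↥W = 1})
    (h₁ : x₁.1 ≤ p.1 ⊔ q'.1) (h₁' : x₁.1 ≤ p'.1 ⊔ q.1)
    (h₂ : x₂.1 ≤ p.1 ⊔ r'.1) (h₂' : x₂.1 ≤ p'.1 ⊔ r.1)
    (h₃ : x₃.1 ≤ q.1 ⊔ r'.1) (h₃' : x₃.1 ≤ q'.1 ⊔ r.1) :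
    ∃ m : Submodule K (Fin 3 → K), Module.finrank K ↥m = 2 ∧
      x₁.1 ≤ m ∧ x₂.1 ≤ m ∧ x₃.1 ≤ m := by
  have hllne : ℓ.1 ≠ ℓ'.1 := fun h => hll (Subtype.ext h)
  -- the intersection point of the two lines
  have hinfll : finrank K ↥(ℓ.1 ⊓ ℓ'.1) = 1 := aux_inf1 ℓ.2 ℓ'.2 hllne
  obtain ⟨u, hu0, hu⟩ := aux_exists_span _ hinfll
  have humem : u ∈ ℓ.1 ⊓ ℓ'.1 := hu ▸ mem_span_singleton_self u
  have huℓ : u ∈ ℓ.1 := humem.1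
  have huℓ' : u ∈ ℓ'.1 := humem.2
  -- spanning vectors for p and p'
  obtain ⟨a, ha0, ha⟩ := aux_exists_span p.1 p.2
  have haℓ : a ∈ ℓ.1 := hp (ha ▸ mem_span_singleton_self a)
  have haℓ' : a ∉ ℓ'.1 := fun h =>
    hp2 (by rw [ha, span_le, Set.singleton_subset_iff]; exact h)
  obtain ⟨a', ha'0, ha'⟩ := aux_exists_span p'.1 p'.2
  have ha'ℓ' : a' ∈ ℓ'.1 := hp' (ha' ▸ mem_span_singleton_self a')
  have ha'ℓ : a' ∉ ℓ.1 := fun h =>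
    hp'2 (by rw [ha', span_le, Set.singleton_subset_iff]; exact h)
  -- ℓ = span {a, u}
  have hau : span K ({a} : Set (Fin 3 → K)) ≠ span K {u} := by
    intro h
    apply haℓ'
    have : a ∈ span K ({u} : Set (Fin 3 → K)) := h ▸ mem_span_singleton_self a
    obtain ⟨c, hc⟩ := mem_span_singleton.mp this
    rw [← hc]; exact smul_mem _ _ huℓ'
  have hℓspan : ℓ.1 = span K {a, u} := by
    refine (Submodule.eq_of_le_of_finrank_eq ?_ ?_).symm
    · rw [span_le]
      rintro x hx
      simp only [Set.mem_insert_iff, Set.mem_singleton_iff] at hx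
      rcases hx with rfl | rfl
      · exact haℓ
      · exact huℓ
    · have h2 : finrank K ↥(span K ({a, u} : Set (Fin 3 → K))) = 2 := by
        rw [span_insert]
        exact aux_sup2 (finrank_span_singleton ha0) (finrank_span_singleton hu0) hau
      exact h2.trans ℓ.2.symm
  have ha'u : span K ({a'} : Set (Fin 3 → K)) ≠ span K {u} := by
    intro h
    apply ha'ℓ
    have : a' ∈ span K ({u} : Set (Fin 3 → K)) := h ▸ mem_span_singleton_self a'
    obtain ⟨c, hc⟩ := mem_span_singleton.mp this
    rw [← hc]; exact smul_mem _ _ huℓ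
  have hℓ'span : ℓ'.1 = span K {a', u} := by
    refine (Submodule.eq_of_le_of_finrank_eq ?_ ?_).symm
    · rw [span_le]
      rintro x hx
      simp only [Set.mem_insert_iff, Set.mem_singleton_iff] at hx
      rcases hx with rfl | rfl
      · exact ha'ℓ'
      · exact huℓ'
    · have h2 : finrank K ↥(span K ({a', u} : Set (Fin 3 → K))) = 2 := by
        rw [span_insert]
        exact aux_sup2 (finrank_span_singleton ha'0) (finrank_span_singleton hu0) ha'u
      exact h2.trans ℓ'.2.symm
  -- parameters for q, r, q', r'
  obtain ⟨β, hqs⟩ := aux_param hℓspan q.2 hq huℓ' hq2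
  obtain ⟨γ, hrs⟩ := aux_param hℓspan r.2 hr huℓ' hr2
  obtain ⟨β', hq's⟩ := aux_param hℓ'span q'.2 hq' huℓ hq'2
  obtain ⟨γ', hr's⟩ := aux_param hℓ'span r'.2 hr' huℓ hr'2
  have hβ0 : β ≠ 0 := fun h =>
    hpq (Subtype.ext (by rw [ha, hqs, h, zero_smul, add_zero]))
  have hγ0 : γ ≠ 0 := fun h =>
    hpr (Subtype.ext (by rw [ha, hrs, h, zero_smul, add_zero]))
  have hβγ : β ≠ γ := fun h => hqr (Subtype.ext (by rw [hqs, hrs, h]))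
  have hβ'0 : β' ≠ 0 := fun h =>
    hpq' (Subtype.ext (by rw [ha', hq's, h, zero_smul, add_zero]))
  have hγ'0 : γ' ≠ 0 := fun h =>
    hpr' (Subtype.ext (by rw [ha', hr's, h, zero_smul, add_zero]))
  have hβγ' : β' ≠ γ' := fun h => hqr' (Subtype.ext (by rw [hq's, hr's, h]))
  -- independence of a, a', u
  have hind : ∀ c₁ c₂ c₃ : K, c₁ • a + c₂ • a' + c₃ • u = 0 →
      c₁ = 0 ∧ c₂ = 0 ∧ c₃ = 0 := by
    intro c₁ c₂ c₃ h
    have hc₂ : c₂ = 0 := by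
      by_contra hc
      apply ha'ℓ
      have h3 : c₂ • a' = -(c₁ • a) - c₃ • u := by
        linear_combination (norm := module) h
      have h2 : a' = c₂⁻¹ • (-(c₁ • a) - c₃ • u) := by
        rw [← h3, smul_smul, inv_mul_cancel₀ hc, one_smul]
      rw [h2]
      exact smul_mem _ _ (sub_mem (neg_mem (smul_mem _ _ haℓ)) (smul_mem _ _ huℓ))
    subst hc₂
    have h' : c₁ • a + c₃ • u = 0 := by
      rw [zero_smul, add_zero] at h; exact h
    have hc₁ : c₁ = 0 := by
      by_contra hc
      apply haℓ'
      have h3 : c₁ • a = -(c₃ • u) := by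
        linear_combination (norm := module) h'
      have h2 : a = c₁⁻¹ • (-(c₃ • u)) := by
        rw [← h3, smul_smul, inv_mul_cancel₀ hc, one_smul]
      rw [h2]
      exact smul_mem _ _ (neg_mem (smul_mem _ _ huℓ'))
    subst hc₁
    rw [zero_smul, zero_add] at h'
    exact ⟨rfl, rfl, smul_eq_zero.mp h' |>.resolve_right hu0⟩
  -- the three intersection vectors
  set v₁ : Fin 3 → K := β' • a + β • a' + (β * β') • u with hv₁def
  set v₂ : Fin 3 → K := γ' • a + γ • a' + (γ * γ') • u with hv₂def
  have hv₁0 : v₁ ≠ 0 := fun h => hβ'0 (hind _ _ _ h).1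
  have hv₂0 : v₂ ≠ 0 := fun h => hγ'0 (hind _ _ _ h).1
  have hv₃eq : v₁ - v₂ = (β' - γ') • a + (β - γ) • a' + (β * β' - γ * γ') • u := by
    rw [hv₁def, hv₂def]; module
  have hv₃0 : v₁ - v₂ ≠ 0 := fun h => by
    rw [hv₃eq] at h
    exact hβγ' (sub_eq_zero.mp (hind _ _ _ h).1)
  -- memberships
  have hamem : a ∈ p.1 := ha ▸ mem_span_singleton_self a
  have ha'mem : a' ∈ p'.1 := ha' ▸ mem_span_singleton_self a'
  have hqmem : a + β • u ∈ q.1 := hqs ▸ mem_span_singleton_self _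
  have hrmem : a + γ • u ∈ r.1 := hrs ▸ mem_span_singleton_self _
  have hq'mem : a' + β' • u ∈ q'.1 := hq's ▸ mem_span_singleton_self _
  have hr'mem : a' + γ' • u ∈ r'.1 := hr's ▸ mem_span_singleton_self _
  have hv₁P : v₁ ∈ p.1 ⊔ q'.1 := by
    have he : v₁ = β' • a + β • (a' + β' • u) := by rw [hv₁def]; module
    rw [he]
    exact add_mem (mem_sup_left (smul_mem _ _ hamem))
      (mem_sup_right (smul_mem _ _ hq'mem))
  have hv₁P' : v₁ ∈ p'.1 ⊔ q.1 := by
    have he : v₁ = β • a' + β' • (a + β • u) := by rw [hv₁def]; module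
    rw [he]
    exact add_mem (mem_sup_left (smul_mem _ _ ha'mem))
      (mem_sup_right (smul_mem _ _ hqmem))
  have hv₂P : v₂ ∈ p.1 ⊔ r'.1 := by
    have he : v₂ = γ' • a + γ • (a' + γ' • u) := by rw [hv₂def]; module
    rw [he]
    exact add_mem (mem_sup_left (smul_mem _ _ hamem))
      (mem_sup_right (smul_mem _ _ hr'mem))
  have hv₂P' : v₂ ∈ p'.1 ⊔ r.1 := by
    have he : v₂ = γ • a' + γ' • (a + γ • u) := by rw [hv₂def]; module
    rw [he]
    exact add_mem (mem_sup_left (smul_mem _ _ ha'mem))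
      (mem_sup_right (smul_mem _ _ hrmem))
  have hv₃P : v₁ - v₂ ∈ q.1 ⊔ r'.1 := by
    have he : v₁ - v₂ = (β' - γ') • (a + β • u) + (β - γ) • (a' + γ' • u) := by
      rw [hv₁def, hv₂def]; module
    rw [he]
    exact add_mem (mem_sup_left (smul_mem _ _ hqmem))
      (mem_sup_right (smul_mem _ _ hr'mem))
  have hv₃P' : v₁ - v₂ ∈ q'.1 ⊔ r.1 := by
    have he : v₁ - v₂ = (β - γ) • (a' + β' • u) + (β' - γ') • (a + γ • u) := by
      rw [hv₁def, hv₂def]; module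
    rw [he]
    exact add_mem (mem_sup_left (smul_mem _ _ hq'mem))
      (mem_sup_right (smul_mem _ _ hrmem))
  -- the line m through the three points
  have hv₁v₂ : span K ({v₁} : Set (Fin 3 → K)) ≠ span K {v₂} := by
    intro h
    have hmem : v₂ ∈ span K ({v₁} : Set (Fin 3 → K)) := h ▸ mem_span_singleton_self v₂
    obtain ⟨c, hc⟩ := mem_span_singleton.mp hmem
    have h0 : (γ' - c * β') • a + (γ - c * β) • a' + (γ * γ' - c * (β * β')) • u = 0 := by
      rw [hv₁def, hv₂def] at hc
      linear_combination (norm := module) (-1 : K) • hc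
    obtain ⟨e1, e2, e3⟩ := hind _ _ _ h0
    have e1' : γ' = c * β' := sub_eq_zero.mp e1
    have e2' : γ = c * β := sub_eq_zero.mp e2
    have e3' : γ * γ' = c * (β * β') := sub_eq_zero.mp e3
    have hcne : c ≠ 0 := fun h => hγ0 (by rw [e2', h, zero_mul])
    have hcc : c * c * (β * β') = c * (β * β') := by
      rw [e2', e1'] at e3'; linear_combination e3'
    have hc1 : c = 1 := by
      have h2 := mul_right_cancel₀ (mul_ne_zero hβ0 hβ'0) hcc
      have h3 : c * (c - 1) = 0 := by linear_combination h2
      rcases mul_eq_zero.mp h3 with h4 | h4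
      · exact absurd h4 hcne
      · exact sub_eq_zero.mp h4
    exact hβγ (by rw [e2', hc1, one_mul])
  refine ⟨span K {v₁} ⊔ span K {v₂},
    aux_sup2 (finrank_span_singleton hv₁0) (finrank_span_singleton hv₂0) hv₁v₂, ?_, ?_, ?_⟩
  · -- x₁
    have hne : p.1 ⊔ q'.1 ≠ p'.1 ⊔ q.1 :=
      aux_planes_ne ℓ.2 ℓ'.2 hllne p.2 q.2 p'.2 q'.2 hp hq hp' hq'
        (fun h => hpq (Subtype.ext h)) (fun h => hpq' (Subtype.ext h)) hp2
    have hD : finrank K ↥((p.1 ⊔ q'.1) ⊓ (p'.1 ⊔ q.1)) = 1 :=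
      aux_inf1 (aux_sup2 p.2 q'.2 (fun h => hp2 (h ▸ hq'))) 
        (aux_sup2 p'.2 q.2 (fun h => hp'2 (h ▸ hq))) hne
    have hx₁ : x₁.1 = span K {v₁} :=
      aux_point x₁.2 (le_inf h₁ h₁') hD (mem_inf.mpr ⟨hv₁P, hv₁P'⟩) hv₁0
    rw [hx₁]; exact le_sup_left
  · -- x₂
    have hne : p.1 ⊔ r'.1 ≠ p'.1 ⊔ r.1 :=
      aux_planes_ne ℓ.2 ℓ'.2 hllne p.2 r.2 p'.2 r'.2 hp hr hp' hr'
        (fun h => hpr (Subtype.ext h)) (fun h => hpr' (Subtype.ext h)) hp2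
    have hD : finrank K ↥((p.1 ⊔ r'.1) ⊓ (p'.1 ⊔ r.1)) = 1 :=
      aux_inf1 (aux_sup2 p.2 r'.2 (fun h => hp2 (h ▸ hr'))) 
        (aux_sup2 p'.2 r.2 (fun h => hp'2 (h ▸ hr))) hne
    have hx₂ : x₂.1 = span K {v₂} :=
      aux_point x₂.2 (le_inf h₂ h₂') hD (mem_inf.mpr ⟨hv₂P, hv₂P'⟩) hv₂0
    rw [hx₂]; exact le_sup_right
  · -- x₃
    have hne : q.1 ⊔ r'.1 ≠ q'.1 ⊔ r.1 :=
      aux_planes_ne ℓ.2 ℓ'.2 hllne q.2 r.2 q'.2 r'.2 hq hr hq' hr'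
        (fun h => hqr (Subtype.ext h)) (fun h => hqr' (Subtype.ext h)) hq2
    have hD : finrank K ↥((q.1 ⊔ r'.1) ⊓ (q'.1 ⊔ r.1)) = 1 :=
      aux_inf1 (aux_sup2 q.2 r'.2 (fun h => hq2 (h ▸ hr'))) 
        (aux_sup2 q'.2 r.2 (fun h => hq'2 (h ▸ hr))) hne
    have hx₃ : x₃.1 = span K {v₁ - v₂} :=
      aux_point x₃.2 (le_inf h₃ h₃') hD (mem_inf.mpr ⟨hv₃P, hv₃P'⟩) hv₃0
    rw [hx₃, span_le, Set.singleton_subset_iff]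
    exact sub_mem (mem_sup_left (mem_span_singleton_self v₁))
      (mem_sup_right (mem_span_singleton_self v₂))
end
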